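/- Let F and G be real-valued functions on N^∞ × ℕ, and let α, β : N^∞ → ℝ satisfy α_0·β_0 = 1 and Σ_{L+L'=b} α_L·β_{L'} = 0 for every b ∈ N^∞ with b ≠ 0 (the sum being over all ordered pairs (L, L') in N^∞ with L + L' = b). Then the following are equivalent: (i) G(b,n) = Σ_{L+L'=b} α_L·F(L', n+|L|) for all (b,n) ∈ N^∞ × ℕ; (ii) F(b,n) = Σ_{L+L'=b} β_L·G(L', n+|L|) for all (b,n) ∈ N^∞ × ℕ. -/

import Mathlib

/-- The weighted degree `|L| = Σ_{i ≥ 1} i · L(i)` of `L ∈ N^∞`, where `N^∞` is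
modeled by finitely supported functions `ℕ+ →₀ ℕ`. -/
def wdeg (L : ℕ+ →₀ ℕ) : ℕ := L.sum fun i c => (i : ℕ) * c

lemma wdeg_add (a b : ℕ+ →₀ ℕ) : wdeg (a + b) = wdeg a + wdeg b := by
  unfold wdeg
  exact Finsupp.sum_add_index' (fun i => mul_zero _) (fun i c d => mul_add _ _ _)

lemma wdeg_zero : wdeg 0 = 0 := by simp [wdeg]

lemma inversion_key (F G : (ℕ+ →₀ ℕ) → ℕ → ℝ) (α β : (ℕ+ →₀ ℕ) → ℝ)
    (h0 : β 0 * α 0 = 1)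
    (h : ∀ b : ℕ+ →₀ ℕ, b ≠ 0 →
      ∑ p ∈ Finset.HasAntidiagonal.antidiagonal b, β p.1 * α p.2 = 0)
    (hG : ∀ (b : ℕ+ →₀ ℕ) (n : ℕ),
        G b n = ∑ p ∈ Finset.HasAntidiagonal.antidiagonal b, α p.1 * F p.2 (n + wdeg p.1)) :
    ∀ (b : ℕ+ →₀ ℕ) (n : ℕ),
        F b n = ∑ p ∈ Finset.HasAntidiagonal.antidiagonal b, β p.1 * G p.2 (n + wdeg p.1) := by
  intro b n
  have key : ∑ p ∈ Finset.HasAntidiagonal.antidiagonal b, β p.1 * G p.2 (n + wdeg p.1)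
      = ∑ r ∈ Finset.HasAntidiagonal.antidiagonal b,
          (∑ s ∈ Finset.HasAntidiagonal.antidiagonal r.1, β s.1 * α s.2) * F r.2 (n + wdeg r.1) := by
    simp_rw [hG, Finset.mul_sum, Finset.sum_mul]
    rw [Finset.sum_sigma', Finset.sum_sigma']
    apply Finset.sum_nbij' (i := fun x => ⟨(x.1.1 + x.2.1, x.2.2), (x.1.1, x.2.1)⟩)
      (j := fun x => ⟨(x.2.1, x.2.2 + x.1.2), (x.2.2, x.1.2)⟩)
    · rintro ⟨⟨p1, p2⟩, ⟨q1, q2⟩⟩ hx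
      simp only [Finset.mem_sigma, Finset.HasAntidiagonal.mem_antidiagonal] at hx ⊢
      obtain ⟨h1, h2⟩ := hx
      exact ⟨by rw [← h1, ← h2]; abel, trivial⟩
    · rintro ⟨⟨p1, p2⟩, ⟨q1, q2⟩⟩ hx
      simp only [Finset.mem_sigma, Finset.HasAntidiagonal.mem_antidiagonal] at hx ⊢
      obtain ⟨h1, h2⟩ := hx
      exact ⟨by rw [← h1, ← h2]; abel, trivial⟩
    · rintro ⟨⟨p1, p2⟩, ⟨q1, q2⟩⟩ hx
      simp only [Finset.mem_sigma, Finset.HasAntidiagonal.mem_antidiagonal] at hx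
      obtain ⟨h1, h2⟩ := hx
      subst h2; rfl
    · rintro ⟨⟨p1, p2⟩, ⟨q1, q2⟩⟩ hx
      simp only [Finset.mem_sigma, Finset.HasAntidiagonal.mem_antidiagonal] at hx
      obtain ⟨h1, h2⟩ := hx
      subst h2; rfl
    · rintro ⟨⟨p1, p2⟩, ⟨q1, q2⟩⟩ hx
      simp only
      rw [wdeg_add]
      ring_nf
  rw [key]
  rw [Finset.sum_eq_single (0, b)]
  · simp [wdeg_zero, h0]
  · rintro ⟨r1, r2⟩ hr hne
    have hr1 : r1 ≠ 0 := by
      rintro rfl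
      simp only [Finset.HasAntidiagonal.mem_antidiagonal, zero_add] at hr
      exact hne (by rw [hr])
    rw [h r1 hr1, zero_mul]
  · intro hb
    exact absurd (Finset.HasAntidiagonal.mem_antidiagonal.mpr (zero_add b)) hb

/-- **Lemma 3.2**: let `α, β : N^∞ → ℝ` satisfy `α₀ β₀ = 1` and
`Σ_{L+L'=b} α_L β_{L'} = 0` for all `b ≠ 0`.  Then for functions
`F, G : N^∞ × ℕ → ℝ` the two inversion identities are equivalent. -/
theorem inversion_lemma_higher (F G : (ℕ+ →₀ ℕ) → ℕ → ℝ) (α β : (ℕ+ →₀ ℕ) → ℝ)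
    (h0 : α 0 * β 0 = 1)
    (h : ∀ b : ℕ+ →₀ ℕ, b ≠ 0 →
      ∑ p ∈ Finset.HasAntidiagonal.antidiagonal b, α p.1 * β p.2 = 0) :
    (∀ (b : ℕ+ →₀ ℕ) (n : ℕ),
        G b n = ∑ p ∈ Finset.HasAntidiagonal.antidiagonal b, α p.1 * F p.2 (n + wdeg p.1)) ↔
      (∀ (b : ℕ+ →₀ ℕ) (n : ℕ),
        F b n = ∑ p ∈ Finset.HasAntidiagonal.antidiagonal b, β p.1 * G p.2 (n + wdeg p.1)) := by
  have h0' : β 0 * α 0 = 1 := by rw [mul_comm]; exact h0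
  have h' : ∀ b : ℕ+ →₀ ℕ, b ≠ 0 →
      ∑ p ∈ Finset.HasAntidiagonal.antidiagonal b, β p.1 * α p.2 = 0 := by
    intro b hb
    rw [Finsupp.sum_antidiagonal_swap b (fun x y => β x * α y)]
    simp_rw [mul_comm]
    exact h b hb
  constructor
  · exact inversion_key F G α β h0' h'
  · exact inversion_key G F β α h0 h
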